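/- arXiv:2302.00645 — 9 statements merged into one kernel-verified Lean document; each statement's English description precedes it below -/
import Mathlib

section
/- For all n ≥ 1, the number of partitions with perimeter n and all parts odd equals the number of partitions with perimeter n and distinct parts. -/
/-!
Both kinds of partitions of perimeter `n` are in bijection with the lists `g` of natural
numbers satisfying `2 * g.length + g.sum - 1 = n`. A partition `λ₁ > ⋯ > λₖ` into distinct parts
corresponds to its gaps `gᵢ = λᵢ - λᵢ₊₁ - 1` (with `λₖ₊₁ = 0`), so that `λ₁ = g.sum + k`.
A partition into odd parts with largest part `2m - 1` corresponds to the multiplicities of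
`2m - 1, …, 3, 1`, the first of them (which is positive) lowered by one, so that `m = g.length`
and the number of parts is `g.sum + 1`.
-/

/-- A partition: weakly decreasing finite sequence of positive integers. -/
def IsPartition (l : List ℕ) : Prop := (∀ x ∈ l, 0 < x) ∧ l.Pairwise (· ≥ ·)

/-- The perimeter of a partition: largest part plus number of parts minus one. -/
def perimeter (l : List ℕ) : ℕ := l.headI + l.length - 1

open Function

theorem Nat.card_subtype_eq_of_injective {α β : Type*} {f : α → β} (hf : Injective f)
    {p q : β → Prop} (h : ∀ b, p b ↔ b ∈ Set.range f ∧ q b) :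
    Nat.card {b // p b} = Nat.card {a // q (f a)} := by
  have himage : {b | p b} = f '' {a | q (f a)} := by
    ext b
    simp only [Set.mem_ofPred_eq, h, Set.mem_image]
    constructor
    · rintro ⟨⟨a, rfl⟩, hq⟩
      exact ⟨a, hq, rfl⟩
    · rintro ⟨a, hq, rfl⟩
      exact ⟨⟨a, rfl⟩, hq⟩
  exact (congrArg (fun s : Set β => Nat.card s) himage).trans
    (Nat.card_image_of_injective hf _)

theorem List.Pairwise.headI_rel {α : Type*} [Inhabited α] {R : α → α → Prop} [Std.Refl R]
    {l : List α} (h : l.Pairwise R) {a : α} (ha : a ∈ l) : R l.headI a := by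
  cases l with
  | nil => contradiction
  | cons b t =>
    rcases List.mem_cons.1 ha with rfl | ha
    · exact refl_of R a
    · exact List.rel_of_pairwise_cons h ha

namespace PerimeterPartition

def distinctOfGaps : List ℕ → List ℕ
  | [] => []
  | a :: g => (a + 1 + (distinctOfGaps g).headI) :: distinctOfGaps g

theorem length_distinctOfGaps (g : List ℕ) : (distinctOfGaps g).length = g.length := by
  induction g with
  | nil => rfl
  | cons a g ih => simp [distinctOfGaps, ih]

theorem headI_distinctOfGaps (g : List ℕ) : (distinctOfGaps g).headI = g.sum + g.length := by
  induction g with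
  | nil => rfl
  | cons a g ih =>
    simp only [distinctOfGaps, List.headI_cons, ih, List.sum_cons, List.length_cons]
    ring

theorem perimeter_distinctOfGaps (g : List ℕ) :
    perimeter (distinctOfGaps g) = 2 * g.length + g.sum - 1 := by
  rw [perimeter, headI_distinctOfGaps, length_distinctOfGaps]
  ring_nf

theorem distinctOfGaps_injective : Injective distinctOfGaps := by
  intro g g' h
  induction g generalizing g' with
  | nil => cases g' <;> simp_all [distinctOfGaps]
  | cons a g ih =>
    cases g' with
    | nil => simp [distinctOfGaps] at h
    | cons a' g' =>
      simp only [distinctOfGaps, List.cons.injEq] at h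
      obtain rfl := ih h.2
      simp_all

theorem mem_range_distinctOfGaps {l : List ℕ} :
    l ∈ Set.range distinctOfGaps ↔ (∀ x ∈ l, 0 < x) ∧ l.Pairwise (· > ·) := by
  constructor
  · rintro ⟨g, rfl⟩
    induction g with
    | nil => simp [distinctOfGaps]
    | cons a g ih =>
      have hle : ∀ x ∈ distinctOfGaps g, x ≤ (distinctOfGaps g).headI := fun x hx =>
        (ih.2.imp le_of_lt).headI_rel hx
      simp only [distinctOfGaps, List.mem_cons, forall_eq_or_imp, List.pairwise_cons]
      refine ⟨⟨by omega, ih.1⟩, fun x hx => ?_, ih.2⟩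
      have := hle x hx
      omega
  · rintro ⟨hpos, hl⟩
    induction l with
    | nil => exact ⟨[], rfl⟩
    | cons x t ih =>
      rw [List.pairwise_cons] at hl
      obtain ⟨g, hg⟩ := ih (fun y hy => hpos y (by simp [hy])) hl.2
      have hx : t.headI < x := by
        cases t with
        | nil => exact hpos x (by simp)
        | cons y t => exact hl.1 y (by simp)
      exact ⟨(x - t.headI - 1) :: g, by simp only [distinctOfGaps, hg]; congr 1; omega⟩

/-- `c` lists the multiplicities of `2 * c.length - 1, …, 3, 1`. -/
def oddOfMults : List ℕ → List ℕ
  | [] => []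
  | a :: c => List.replicate a (2 * c.length + 1) ++ oddOfMults c

def mults : ℕ → List ℕ → List ℕ
  | 0, _ => []
  | m + 1, l => l.count (2 * m + 1) :: mults m l

theorem length_oddOfMults (c : List ℕ) : (oddOfMults c).length = c.sum := by
  induction c with
  | nil => rfl
  | cons a c ih => simp [oddOfMults, ih]

theorem length_mults (m : ℕ) (l : List ℕ) : (mults m l).length = m := by
  induction m with
  | zero => rfl
  | succ m ih => simp [mults, ih]

theorem odd_and_lt_of_mem_oddOfMults {c : List ℕ} {x : ℕ} (hx : x ∈ oddOfMults c) :
    Odd x ∧ x < 2 * c.length := by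
  induction c with
  | nil => simp [oddOfMults] at hx
  | cons a c ih =>
    simp only [oddOfMults, List.mem_append, List.mem_replicate] at hx
    rcases hx with ⟨-, rfl⟩ | hx
    · simp only [List.length_cons]
      exact ⟨odd_two_mul_add_one _, by omega⟩
    · have := ih hx
      simp only [List.length_cons]
      exact ⟨this.1, by omega⟩

theorem pairwise_oddOfMults (c : List ℕ) : (oddOfMults c).Pairwise (· ≥ ·) := by
  induction c with
  | nil => simp [oddOfMults]
  | cons a c ih =>
    rw [oddOfMults, List.pairwise_append]
    refine ⟨List.pairwise_replicate.2 (Or.inr le_rfl), ih, ?_⟩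
    intro x hx y hy
    rw [(List.mem_replicate.1 hx).2]
    have := (odd_and_lt_of_mem_oddOfMults hy).2
    omega

theorem oddOfMults_inj_of_length_eq {c c' : List ℕ} (hlen : c.length = c'.length)
    (h : oddOfMults c = oddOfMults c') : c = c' := by
  induction c generalizing c' with
  | nil => exact (List.eq_nil_of_length_eq_zero hlen.symm).symm
  | cons a c ih =>
    obtain ⟨a', c', rfl⟩ := List.exists_cons_of_length_eq_add_one hlen.symm
    simp only [List.length_cons, add_left_inj] at hlen
    simp only [oddOfMults, hlen] at h
    have hcount := congrArg (List.count (2 * c'.length + 1)) h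
    have hnot : ∀ d : List ℕ, d.length = c'.length →
        (oddOfMults d).count (2 * c'.length + 1) = 0 := fun d hd =>
      List.count_eq_zero.2 fun hm => by have := (odd_and_lt_of_mem_oddOfMults hm).2; omega
    simp only [List.count_append, List.count_replicate_self, hnot c hlen, hnot c' rfl,
      add_zero] at hcount
    subst hcount
    rw [ih hlen (List.append_cancel_left h)]

theorem count_oddOfMults_mults (m : ℕ) (l : List ℕ) (x : ℕ) :
    (oddOfMults (mults m l)).count x = if Odd x ∧ x < 2 * m then l.count x else 0 := by
  induction m with
  | zero => simp [mults, oddOfMults]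
  | succ m ih =>
    simp only [mults, oddOfMults, List.count_append, List.count_replicate, ih, length_mults]
    by_cases hx : x = 2 * m + 1
    · subst hx
      have hlt : ¬(Odd (2 * m + 1) ∧ 2 * m + 1 < 2 * m) := by omega
      have hlt' : Odd (2 * m + 1) ∧ 2 * m + 1 < 2 * (m + 1) := ⟨odd_two_mul_add_one m, by omega⟩
      simp only [beq_self_eq_true, if_true, if_neg hlt, if_pos hlt', add_zero]
    · have hbound : (Odd x ∧ x < 2 * (m + 1)) ↔ (Odd x ∧ x < 2 * m) := by
        constructor
        · rintro ⟨⟨k, rfl⟩, h⟩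
          exact ⟨⟨k, rfl⟩, by omega⟩
        · rintro ⟨h, h'⟩
          exact ⟨h, by omega⟩
      simp [Ne.symm hx, hbound]

theorem oddOfMults_mults {m : ℕ} {l : List ℕ} (hl : l.Pairwise (· ≥ ·))
    (hodd : ∀ x ∈ l, Odd x) (hlt : ∀ x ∈ l, x < 2 * m) : oddOfMults (mults m l) = l := by
  refine List.Perm.eq_of_pairwise' (pairwise_oddOfMults _) hl (List.perm_iff_count.2 fun x => ?_)
  rw [count_oddOfMults_mults]
  split_ifs with hx
  · rfl
  · exact (List.count_eq_zero.2 fun hm => hx ⟨hodd x hm, hlt x hm⟩).symm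

def oddOfGaps : List ℕ → List ℕ
  | [] => []
  | a :: g => oddOfMults ((a + 1) :: g)

theorem perimeter_oddOfGaps (g : List ℕ) :
    perimeter (oddOfGaps g) = 2 * g.length + g.sum - 1 := by
  cases g with
  | nil => rfl
  | cons a g =>
    simp only [perimeter, oddOfGaps, oddOfMults, List.length_append, List.length_replicate,
      length_oddOfMults, List.length_cons, List.sum_cons, List.replicate_succ, List.cons_append,
      List.headI_cons]
    omega

theorem oddOfGaps_injective : Injective oddOfGaps := by
  rintro (_ | ⟨a, g⟩) (_ | ⟨a', g'⟩) h
  · rfl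
  · simp [oddOfGaps, oddOfMults, List.replicate_succ] at h
  · simp [oddOfGaps, oddOfMults, List.replicate_succ] at h
  · have hhead := congrArg List.headI h
    simp only [oddOfGaps, oddOfMults, List.replicate_succ, List.cons_append,
      List.headI_cons] at hhead
    have := oddOfMults_inj_of_length_eq (c := (a + 1) :: g) (c' := (a' + 1) :: g')
      (by simp; omega) h
    simp_all

theorem mem_range_oddOfGaps {l : List ℕ} :
    l ∈ Set.range oddOfGaps ↔ IsPartition l ∧ ∀ x ∈ l, Odd x := by
  constructor
  · rintro ⟨(_ | ⟨a, g⟩), rfl⟩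
    · simp [oddOfGaps, IsPartition]
    · have hodd := fun x (hx : x ∈ oddOfGaps (a :: g)) => (odd_and_lt_of_mem_oddOfMults hx).1
      exact ⟨⟨fun x hx => (hodd x hx).pos, pairwise_oddOfMults _⟩, hodd⟩
  · rintro ⟨⟨-, hl⟩, hodd⟩
    cases l with
    | nil => exact ⟨[], rfl⟩
    | cons x t =>
      obtain ⟨m, rfl⟩ := hodd x (by simp)
      have hlt : ∀ y ∈ (2 * m + 1) :: t, y < 2 * (m + 1) := fun y hy => by
        have := hl.headI_rel hy
        simp only [List.headI_cons] at this
        omega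
      have hcount : 0 < ((2 * m + 1) :: t).count (2 * m + 1) := List.count_pos_iff.2 (by simp)
      refine ⟨(((2 * m + 1) :: t).count (2 * m + 1) - 1) :: mults m ((2 * m + 1) :: t), ?_⟩
      rw [oddOfGaps, Nat.sub_add_cancel hcount]
      exact oddOfMults_mults hl hodd hlt

end PerimeterPartition

open PerimeterPartition in
theorem straub_general (n : ℕ) :
    Nat.card {l : List ℕ // IsPartition l ∧ perimeter l = n ∧ ∀ x ∈ l, Odd x} =
    Nat.card {l : List ℕ // IsPartition l ∧ perimeter l = n ∧ l.Nodup} := by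
  calc Nat.card {l : List ℕ // IsPartition l ∧ perimeter l = n ∧ ∀ x ∈ l, Odd x}
      _ = Nat.card {g : List ℕ // perimeter (oddOfGaps g) = n} :=
        Nat.card_subtype_eq_of_injective (q := (perimeter · = n)) oddOfGaps_injective fun l => by
          rw [mem_range_oddOfGaps]
          tauto
      _ = Nat.card {g : List ℕ // perimeter (distinctOfGaps g) = n} := by
        simp only [perimeter_oddOfGaps, perimeter_distinctOfGaps]
      _ = Nat.card {l : List ℕ // IsPartition l ∧ perimeter l = n ∧ l.Nodup} := by
        refine (Nat.card_subtype_eq_of_injective (q := (perimeter · = n))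
          distinctOfGaps_injective fun l => ?_).symm
        rw [mem_range_distinctOfGaps, ← List.sortedGT_iff_pairwise,
          List.sortedGT_iff_nodup_and_sortedGE, List.sortedGE_iff_pairwise]
        unfold IsPartition
        tauto

theorem straub (n : ℕ) (hn : 1 ≤ n) :
    Nat.card {l : List ℕ // IsPartition l ∧ perimeter l = n ∧ ∀ x ∈ l, Odd x} =
    Nat.card {l : List ℕ // IsPartition l ∧ perimeter l = n ∧ l.Nodup} :=
  straub_general n
end

section
/- For all m ≥ 2 and n ≥ 1, the number of partitions of n with no part divisible by m equals the number of partitions of n in which no part repeats m or more times. -/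
open Finset Nat.Partition

def IsPartition.equivPartition (n : ℕ) :
    {l : List ℕ // IsPartition l ∧ l.sum = n} ≃ n.Partition where
  toFun l := ⟨l.1, fun hi => l.2.1.1 _ hi, l.2.2⟩
  invFun p := ⟨p.parts.sort (· ≥ ·),
    ⟨fun _ hi => p.parts_pos ((Multiset.mem_sort _).mp hi), Multiset.pairwise_sort _ _⟩,
    by rw [← Multiset.sum_coe, Multiset.sort_eq, p.parts_sum]⟩
  left_inv l := Subtype.ext (List.mergeSort_eq_self _ l.2.1.2)
  right_inv p := Nat.Partition.ext (Multiset.sort_eq _ _)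

theorem IsPartition.card_filter (n : ℕ) (P : Multiset ℕ → Prop) [DecidablePred P]
    (Q : List ℕ → Prop) (hQ : ∀ l : List ℕ, Q l ↔ P l) :
    Nat.card {l : List ℕ // IsPartition l ∧ l.sum = n ∧ Q l} =
      #{p : n.Partition | P p.parts} := by
  rw [← Fintype.card_subtype, ← Nat.card_eq_fintype_card]
  exact Nat.card_congr <|
    (Equiv.subtypeEquivRight fun l => by rw [hQ, ← and_assoc]).trans <|
    (Equiv.subtypeSubtypeEquivSubtypeInter _ fun l : List ℕ => P l).symm.trans <|
    (IsPartition.equivPartition n).subtypeEquiv (p := fun l => P l.1) fun _ => Iff.rfl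

theorem IsPartition.card_eq_card_restricted (n : ℕ) (p : ℕ → Prop) [DecidablePred p] :
    Nat.card {l : List ℕ // IsPartition l ∧ l.sum = n ∧ ∀ x ∈ l, p x} = #(restricted n p) :=
  IsPartition.card_filter n (fun s => ∀ x ∈ s, p x) _ fun _ => Iff.rfl

theorem IsPartition.card_eq_card_countRestricted (n : ℕ) {m : ℕ} (hm : 0 < m) :
    Nat.card {l : List ℕ // IsPartition l ∧ l.sum = n ∧ ∀ x, l.count x < m} =
      #(countRestricted n m) := by
  refine IsPartition.card_filter n (fun s => ∀ x ∈ s, s.count x < m) _ fun l => ?_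
  simp only [Multiset.mem_coe, Multiset.coe_count]
  refine ⟨fun h x _ => h x, fun h x => ?_⟩
  by_cases hx : x ∈ l
  · exact h x hx
  · rwa [List.count_eq_zero_of_not_mem hx]

theorem glaisher_general (m n : ℕ) (hm : 2 ≤ m) :
    Nat.card {l : List ℕ // IsPartition l ∧ l.sum = n ∧ ∀ x ∈ l, ¬ m ∣ x} =
    Nat.card {l : List ℕ // IsPartition l ∧ l.sum = n ∧ ∀ x : ℕ, l.count x < m} := by
  rw [IsPartition.card_eq_card_restricted, IsPartition.card_eq_card_countRestricted n (by omega)]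
  exact card_restricted_eq_card_countRestricted n (by omega)

theorem glaisher (m n : ℕ) (hm : 2 ≤ m) (hn : 1 ≤ n) :
    Nat.card {l : List ℕ // IsPartition l ∧ l.sum = n ∧ ∀ x ∈ l, ¬ m ∣ x} =
    Nat.card {l : List ℕ // IsPartition l ∧ l.sum = n ∧ ∀ x : ℕ, l.count x < m} :=
  glaisher_general m n hm
end

section
/- For all m ≥ 2 and n ≤ m, the number of partitions with perimeter n and no part divisible by m equals the number of partitions with perimeter n in which every part repeats fewer than m times. -/
/-!
A part and a multiplicity are both bounded by the perimeter. So when the perimeter is at most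
`m`, the only partition with a part divisible by `m` is `[m]`, and the only one with a part
repeated `m` times is `1 + 1 + ⋯ + 1` (`m` ones). Both have perimeter `m`, so transposing them
matches the two families.
-/

lemma Equiv.swap_apply_iff {α : Type*} [DecidableEq α] {p : α → Prop} {a b : α}
    (h : p a ↔ p b) (x : α) : p (Equiv.swap a b x) ↔ p x := by
  rw [Equiv.swap_apply_def]
  split_ifs with hxa hxb
  · rw [hxa, h]
  · rw [hxb, h]
  · rfl

lemma isPartition_singleton {k : ℕ} (hk : 0 < k) : IsPartition [k] :=
  ⟨by simpa using hk, List.pairwise_singleton _ k⟩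

lemma perimeter_singleton (k : ℕ) : perimeter [k] = k := by
  simp [perimeter]

lemma isPartition_replicate_one (k : ℕ) : IsPartition (List.replicate k 1) :=
  ⟨fun x hx => by rw [List.eq_of_mem_replicate hx]; exact one_pos,
    List.pairwise_replicate.mpr (Or.inr le_rfl)⟩

lemma perimeter_replicate_one {k : ℕ} (hk : 0 < k) : perimeter (List.replicate k 1) = k := by
  obtain ⟨j, rfl⟩ := Nat.exists_eq_succ_of_ne_zero hk.ne'
  simp [perimeter, List.replicate_succ]

namespace IsPartition

variable {l : List ℕ} {k x : ℕ}

lemma le_headI (hl : IsPartition l) (hx : x ∈ l) : x ≤ l.headI := by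
  cases l with
  | nil => simp at hx
  | cons a t =>
    rcases List.mem_cons.mp hx with rfl | hxt
    · exact le_rfl
    · exact (List.pairwise_cons.mp hl.2).1 x hxt

lemma eq_singleton_of_mem_of_le (hl : IsPartition l) (hper : perimeter l ≤ k) (hx : x ∈ l)
    (hkx : k ≤ x) : l = [k] := by
  obtain ⟨a, t, rfl⟩ := List.exists_cons_of_ne_nil (List.ne_nil_of_mem hx)
  have hax : x ≤ a := hl.le_headI hx
  simp only [perimeter, List.headI_cons, List.length_cons] at hper
  have ht : t = [] := List.eq_nil_of_length_eq_zero (by omega)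
  rw [ht, show a = k by omega]

lemma eq_replicate_of_le_count (hl : IsPartition l) (hper : perimeter l ≤ k) (hk : 0 < k)
    (hc : k ≤ l.count x) : l = List.replicate k 1 := by
  have hx : x ∈ l := List.count_pos_iff.mp (by omega)
  have hhead : 0 < l.headI := (hl.1 x hx).trans_le (hl.le_headI hx)
  have hlen : k ≤ l.length := hc.trans List.count_le_length
  simp only [perimeter] at hper
  rw [← show l.length = k by omega]
  refine List.eq_replicate_of_mem fun b hb => ?_
  have := hl.1 b hb
  have := hl.le_headI hb
  omega

lemma forall_not_dvd_iff (hl : IsPartition l) (hper : perimeter l ≤ k) :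
    (∀ x ∈ l, ¬ k ∣ x) ↔ l ≠ [k] := by
  refine ⟨fun h hlk => h k (by simp [hlk]) dvd_rfl, fun hlk x hx hdvd => hlk ?_⟩
  exact hl.eq_singleton_of_mem_of_le hper hx (Nat.le_of_dvd (hl.1 x hx) hdvd)

lemma forall_count_lt_iff (hl : IsPartition l) (hper : perimeter l ≤ k) (hk : 0 < k) :
    (∀ x, l.count x < k) ↔ l ≠ List.replicate k 1 := by
  refine ⟨fun h hlk => ?_, fun hlk x => ?_⟩
  · simpa [hlk] using h 1
  · by_contra hc
    exact hlk (hl.eq_replicate_of_le_count hper hk (not_lt.mp hc))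

end IsPartition

theorem equality_small_n_general (m n : ℕ) (hm : 2 ≤ m) (hnm : n ≤ m) :
    Nat.card {l : List ℕ // IsPartition l ∧ perimeter l = n ∧ ∀ x ∈ l, ¬ m ∣ x} =
    Nat.card {l : List ℕ // IsPartition l ∧ perimeter l = n ∧ ∀ x : ℕ, l.count x < m} := by
  have hm0 : 0 < m := by omega
  let P : List ℕ → Prop := fun l => IsPartition l ∧ perimeter l = n
  have hP : P [m] ↔ P (List.replicate m 1) := by
    simp only [P, isPartition_singleton hm0, isPartition_replicate_one, perimeter_singleton,
      perimeter_replicate_one hm0]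
  set σ := Equiv.swap [m] (List.replicate m 1) with hσ
  refine Nat.card_congr (σ.subtypeEquiv fun l => ?_)
  calc IsPartition l ∧ perimeter l = n ∧ (∀ x ∈ l, ¬ m ∣ x)
      ↔ P l ∧ l ≠ [m] := by
        rw [← and_assoc]
        exact and_congr_right fun hl => hl.1.forall_not_dvd_iff (hl.2.trans_le hnm)
    _ ↔ P (σ l) ∧ σ l ≠ List.replicate m 1 := by
        rw [Equiv.swap_apply_iff hP, hσ, Ne, Ne, Equiv.swap_apply_eq_iff, Equiv.swap_apply_right]
    _ ↔ IsPartition (σ l) ∧ perimeter (σ l) = n ∧ ∀ x, (σ l).count x < m := by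
        rw [← and_assoc]
        exact and_congr_right fun hl => (hl.1.forall_count_lt_iff (hl.2.trans_le hnm) hm0).symm

theorem equality_small_n (m n : ℕ) (hm : 2 ≤ m) (hn : 1 ≤ n) (hnm : n ≤ m) :
    Nat.card {l : List ℕ // IsPartition l ∧ perimeter l = n ∧ ∀ x ∈ l, ¬ m ∣ x} =
    Nat.card {l : List ℕ // IsPartition l ∧ perimeter l = n ∧ ∀ x : ℕ, l.count x < m} :=
  equality_small_n_general m n hm hnm
end

section
/- For all m, n ≥ 1, the number of partitions with perimeter n and all parts congruent to 1 modulo m+1 equals the number of partitions with perimeter n whose consecutive parts differ by at least m. -/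
/-!
Both sides are in bijection with the pairs `(s, g)`, `s > 0`, `g = (g₁, …, g_k)`, of weight
`s + Σ g + (m + 1) k = n`. A partition into parts `≡ 1 (mod m + 1)` with largest part
`(m + 1) k + 1` is recorded by the multiplicities `s, g₁, …, g_k` of the parts
`(m + 1) k + 1, …, m + 2, 1` (so `s > 0`); its perimeter is `(m + 1) k + s + Σ g`.
A partition with `k + 1` parts and gaps at least `m` is recorded by its smallest part `s` and the
excesses `λᵢ - λᵢ₊₁ - m` of its gaps; its largest part is `s + Σ g + m k`, so its perimeter is
again `s + Σ g + (m + 1) k`.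
-/

namespace FuTang

def weight (m : ℕ) (p : ℕ × List ℕ) : ℕ := p.1 + p.2.sum + (m + 1) * p.2.length

theorem card_perimeter_eq_of_injOn {α : Type*} {Q : List ℕ → Prop} {n : ℕ} (hn : 1 ≤ n)
    {S : Set α} {f : α → List ℕ} {w : α → ℕ} (hf : Set.InjOn f S)
    (himage : ∀ l, l ∈ f '' S ↔ l ≠ [] ∧ IsPartition l ∧ Q l)
    (hper : ∀ a ∈ S, perimeter (f a) = w a) :
    Nat.card {l // IsPartition l ∧ perimeter l = n ∧ Q l} =
      Nat.card {a // a ∈ S ∧ w a = n} := by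
  have hfiber :
      {l | IsPartition l ∧ perimeter l = n ∧ Q l} = f '' {a | a ∈ S ∧ w a = n} := by
    ext l
    constructor
    · rintro ⟨hl, rfl, hQ⟩
      have hne : l ≠ [] := by rintro rfl; simp [perimeter] at hn
      obtain ⟨a, ha, rfl⟩ := (himage l).2 ⟨hne, hl, hQ⟩
      exact ⟨a, ⟨ha, (hper a ha).symm⟩, rfl⟩
    · rintro ⟨a, ⟨ha, rfl⟩, rfl⟩
      obtain ⟨-, hl, hQ⟩ := (himage (f a)).1 ⟨a, ha, rfl⟩
      exact ⟨hl, hper a ha, hQ⟩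
  exact (congrArg (fun s : Set (List ℕ) => Nat.card s) hfiber).trans
    (Nat.card_image_of_injOn (hf.mono fun a ha => ha.1))

section Multiplicities

variable {m : ℕ}

variable (m) in
/-- `c :: cs` lists the multiplicities of the parts `(m + 1) * j + 1`, `j = cs.length, …, 0`. -/
def ofMultiplicities : List ℕ → List ℕ
  | [] => []
  | c :: cs => List.replicate c ((m + 1) * cs.length + 1) ++ ofMultiplicities cs

theorem length_ofMultiplicities (ds : List ℕ) :
    (ofMultiplicities m ds).length = ds.sum := by
  induction ds with
  | nil => rfl
  | cons c ds ih => simp [ofMultiplicities, ih]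

theorem exists_eq_of_mem_ofMultiplicities {x : ℕ} :
    ∀ {ds : List ℕ}, x ∈ ofMultiplicities m ds → ∃ j < ds.length, x = (m + 1) * j + 1
  | c :: ds, h => by
    rcases List.mem_append.1 h with h | h
    · exact ⟨ds.length, by simp, List.eq_of_mem_replicate h⟩
    · obtain ⟨j, hj, rfl⟩ := exists_eq_of_mem_ofMultiplicities h
      exact ⟨j, by simp; omega, rfl⟩

theorem pairwise_ofMultiplicities : ∀ ds : List ℕ, (ofMultiplicities m ds).Pairwise (· ≥ ·)
  | [] => List.Pairwise.nil
  | c :: ds => by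
    refine List.pairwise_append.2
      ⟨by simp [List.pairwise_replicate], pairwise_ofMultiplicities ds, ?_⟩
    intro a ha b hb
    obtain rfl := List.eq_of_mem_replicate ha
    obtain ⟨j, hj, rfl⟩ := exists_eq_of_mem_ofMultiplicities hb
    have := Nat.mul_le_mul_left (m + 1) hj.le
    omega

theorem headI_ofMultiplicities {s : ℕ} (hs : 0 < s) (cs : List ℕ) :
    (ofMultiplicities m (s :: cs)).headI = (m + 1) * cs.length + 1 := by
  obtain ⟨s, rfl⟩ := Nat.exists_eq_add_of_lt hs
  simp [ofMultiplicities, List.replicate_succ]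

theorem top_notMem_ofMultiplicities (ds : List ℕ) :
    (m + 1) * ds.length + 1 ∉ ofMultiplicities m ds := by
  intro h
  obtain ⟨j, hj, he⟩ := exists_eq_of_mem_ofMultiplicities h
  have := Nat.mul_le_mul_left (m + 1) hj
  rw [Nat.mul_succ] at this
  omega

theorem ofMultiplicities_injective_of_length_eq :
    ∀ {ds ds' : List ℕ}, ds.length = ds'.length →
      ofMultiplicities m ds = ofMultiplicities m ds' → ds = ds'
  | [], [], _, _ => rfl
  | c :: ds, c' :: ds', hl, h => by
    have hlen : ds.length = ds'.length := Nat.succ_injective hl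
    rw [ofMultiplicities, ofMultiplicities, ← hlen] at h
    -- the top part occurs only in the leading block
    have hc : c = c' := by
      have := congrArg (List.count ((m + 1) * ds.length + 1)) h
      rwa [List.count_append, List.count_append, List.count_replicate_self,
        List.count_replicate_self,
        List.count_eq_zero_of_not_mem (top_notMem_ofMultiplicities ds),
        List.count_eq_zero_of_not_mem (hlen ▸ top_notMem_ofMultiplicities ds')] at this
    subst hc
    exact congrArg (c :: ·)
      (ofMultiplicities_injective_of_length_eq hlen (List.append_cancel_left h))

theorem ofMultiplicities_replicate_zero_append (j : ℕ) (ds : List ℕ) :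
    ofMultiplicities m (List.replicate j 0 ++ ds) = ofMultiplicities m ds := by
  induction j with
  | zero => rfl
  | succ j ih => simp [List.replicate_succ, ofMultiplicities, ih]

theorem ofMultiplicities_one_cons {k : ℕ} {ds : List ℕ} (hk : ds.length ≤ k) :
    ofMultiplicities m (1 :: (List.replicate (k - ds.length) 0 ++ ds)) =
      ((m + 1) * k + 1) :: ofMultiplicities m ds := by
  simp [ofMultiplicities, ofMultiplicities_replicate_zero_append, Nat.sub_add_cancel hk]

theorem exists_ofMultiplicities_eq : ∀ l : List ℕ, l.Pairwise (· ≥ ·) →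
    (∀ x ∈ l, x % (m + 1) = 1) → l ≠ [] → ∃ s cs, 0 < s ∧ ofMultiplicities m (s :: cs) = l
  | a :: t, hsort, hmod, _ => by
    have ha : a = (m + 1) * (a / (m + 1)) + 1 := by
      have := Nat.div_add_mod a (m + 1)
      rw [hmod a List.mem_cons_self] at this
      omega
    set k := a / (m + 1)
    cases t with
    | nil =>
      refine ⟨1, List.replicate k 0, one_pos, ?_⟩
      simpa [ha, ofMultiplicities] using ofMultiplicities_one_cons (ds := []) (Nat.zero_le k)
    | cons b t =>
      obtain ⟨s, cs, hs, heq⟩ := exists_ofMultiplicities_eq (b :: t) hsort.of_cons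
        (fun x hx => hmod x (List.mem_cons_of_mem _ hx)) (List.cons_ne_nil b t)
      have hb : b = (m + 1) * cs.length + 1 := by
        simpa [heq] using headI_ofMultiplicities (m := m) hs cs
      have hba : b ≤ a := List.rel_of_pairwise_cons hsort List.mem_cons_self
      have hk : cs.length ≤ k := by
        by_contra! hlt
        have := Nat.mul_le_mul_left (m + 1) hlt
        rw [Nat.mul_succ] at this
        omega
      rcases hk.eq_or_lt with he | hlt
      · refine ⟨s + 1, cs, s.succ_pos, ?_⟩
        rw [ofMultiplicities, List.replicate_succ, List.cons_append, ← ofMultiplicities, heq, ha,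
          ← he, ← hb]
      · refine ⟨1, List.replicate (k - (s :: cs).length) 0 ++ s :: cs, one_pos, ?_⟩
        rw [ofMultiplicities_one_cons (by simpa using hlt), heq, ← ha]

theorem residue_of_mem_ofMultiplicities (hm : 1 ≤ m) {ds : List ℕ} {x : ℕ}
    (hx : x ∈ ofMultiplicities m ds) : x % (m + 1) = 1 := by
  obtain ⟨j, -, rfl⟩ := exists_eq_of_mem_ofMultiplicities hx
  rw [Nat.mul_add_mod, Nat.mod_eq_of_lt (by omega)]

variable (m) in
theorem card_residue_partitions (hm : 1 ≤ m) {n : ℕ} (hn : 1 ≤ n) :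
    Nat.card {l : List ℕ // IsPartition l ∧ perimeter l = n ∧ ∀ x ∈ l, x % (m + 1) = 1} =
      Nat.card {p : ℕ × List ℕ // 0 < p.1 ∧ weight m p = n} := by
  refine card_perimeter_eq_of_injOn (S := {p : ℕ × List ℕ | 0 < p.1})
    (f := fun p => ofMultiplicities m (p.1 :: p.2)) hn ?_ ?_ ?_
  · rintro ⟨s, cs⟩ hs ⟨s', cs'⟩ hs' h
    have hlen : cs.length = cs'.length := by
      have := congrArg List.headI h
      simp only [headI_ofMultiplicities hs, headI_ofMultiplicities hs'] at this
      exact Nat.eq_of_mul_eq_mul_left (by omega : 0 < m + 1) (by omega)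
    simpa using ofMultiplicities_injective_of_length_eq (by simpa using hlen) h
  · intro l
    constructor
    · rintro ⟨⟨s, cs⟩, hs, rfl⟩
      refine ⟨?_, ⟨?_, pairwise_ofMultiplicities _⟩,
        fun x hx => residue_of_mem_ofMultiplicities hm hx⟩
      · exact List.ne_nil_of_length_pos
          (by simpa [length_ofMultiplicities] using Nat.add_pos_left hs _)
      · intro x hx
        obtain ⟨j, -, rfl⟩ := exists_eq_of_mem_ofMultiplicities hx
        exact Nat.succ_pos _
    · rintro ⟨hne, ⟨-, hsort⟩, hmod⟩
      obtain ⟨s, cs, hs, rfl⟩ := exists_ofMultiplicities_eq l hsort hmod hne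
      exact ⟨(s, cs), hs, rfl⟩
  · rintro ⟨s, cs⟩ hs
    simp only [perimeter, headI_ofMultiplicities hs, length_ofMultiplicities, weight,
      List.sum_cons]
    omega

end Multiplicities

section Gaps

variable {m : ℕ}

variable (m) in
def ofGaps (s : ℕ) : List ℕ → List ℕ
  | [] => [s]
  | g :: gs => (g + m + (ofGaps s gs).headI) :: ofGaps s gs

theorem length_ofGaps (s : ℕ) (gs : List ℕ) : (ofGaps m s gs).length = gs.length + 1 := by
  induction gs with
  | nil => rfl
  | cons g gs ih => simp [ofGaps, ih]

theorem headI_ofGaps (s : ℕ) (gs : List ℕ) :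
    (ofGaps m s gs).headI = s + gs.sum + m * gs.length := by
  induction gs with
  | nil => simp [ofGaps]
  | cons g gs ih => simp [ofGaps, ih]; ring

theorem ofGaps_ne_nil (s : ℕ) (gs : List ℕ) : ofGaps m s gs ≠ [] :=
  List.ne_nil_of_length_pos (by simp [length_ofGaps])

theorem isChain_ofGaps (s : ℕ) :
    ∀ gs : List ℕ, (ofGaps m s gs).IsChain (fun a b => b + m ≤ a)
  | [] => List.isChain_singleton s
  | g :: gs => by
    have hch := isChain_ofGaps s gs
    obtain ⟨b, t, hbt⟩ := List.exists_cons_of_ne_nil (ofGaps_ne_nil s gs)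
    rw [hbt] at hch
    rw [ofGaps, hbt]
    exact List.isChain_cons_cons.2 ⟨by simp only [List.headI_cons]; omega, hch⟩

theorem self_mem_ofGaps (s : ℕ) : ∀ gs : List ℕ, s ∈ ofGaps m s gs
  | [] => List.mem_singleton_self s
  | _ :: gs => List.mem_cons_of_mem _ (self_mem_ofGaps s gs)

theorem le_of_mem_ofGaps {s x : ℕ} : ∀ {gs : List ℕ}, x ∈ ofGaps m s gs → s ≤ x
  | [], hx => (List.mem_singleton.1 hx).ge
  | g :: gs, hx => by
    rcases List.mem_cons.1 hx with rfl | hx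
    · have := headI_ofGaps (m := m) s gs
      omega
    · exact le_of_mem_ofGaps hx

theorem ofGaps_injective : Function.Injective fun p : ℕ × List ℕ => ofGaps m p.1 p.2 := by
  rintro ⟨s, gs⟩ ⟨s', gs'⟩ h
  have hlen : gs.length = gs'.length := by simpa [length_ofGaps] using congrArg List.length h
  induction gs generalizing gs' with
  | nil =>
    obtain rfl := List.eq_nil_of_length_eq_zero hlen.symm
    simpa [ofGaps] using h
  | cons g gs ih =>
    obtain _ | ⟨g', gs'⟩ := gs'
    · simp at hlen
    obtain ⟨hhead, htail⟩ := List.cons.inj h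
    obtain ⟨rfl, rfl⟩ := Prod.mk.inj (ih gs' htail (by simpa using hlen))
    rw [Nat.add_right_cancel (Nat.add_right_cancel hhead)]

theorem exists_ofGaps_eq : ∀ l : List ℕ, l.IsChain (fun a b => b + m ≤ a) → l ≠ [] →
    ∃ s gs, ofGaps m s gs = l
  | [a], _, _ => ⟨a, [], rfl⟩
  | a :: b :: t, hc, _ => by
    obtain ⟨s, gs, heq⟩ := exists_ofGaps_eq (b :: t) hc.tail (List.cons_ne_nil b t)
    have hab : b + m ≤ a := (List.isChain_cons_cons.1 hc).1
    refine ⟨s, (a - b - m) :: gs, ?_⟩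
    have hb : (ofGaps m s gs).headI = b := by rw [heq]; rfl
    rw [ofGaps, hb, heq]
    congr 1
    omega

theorem card_gap_partitions {n : ℕ} (hn : 1 ≤ n) :
    Nat.card
        {l : List ℕ // IsPartition l ∧ perimeter l = n ∧ l.IsChain (fun a b => b + m ≤ a)} =
      Nat.card {p : ℕ × List ℕ // 0 < p.1 ∧ weight m p = n} := by
  refine card_perimeter_eq_of_injOn (S := {p : ℕ × List ℕ | 0 < p.1}) hn
    (ofGaps_injective (m := m)).injOn ?_ ?_
  · intro l
    constructor
    · rintro ⟨⟨s, gs⟩, hs, rfl⟩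
      have hch := isChain_ofGaps (m := m) s gs
      refine ⟨ofGaps_ne_nil s gs, ⟨fun x hx => hs.trans_le (le_of_mem_ofGaps hx), ?_⟩, hch⟩
      exact List.isChain_iff_pairwise.1 (hch.imp fun a b hab => by omega)
    · rintro ⟨hne, ⟨hpos, -⟩, hch⟩
      obtain ⟨s, gs, rfl⟩ := exists_ofGaps_eq l hch hne
      exact ⟨(s, gs), hpos s (self_mem_ofGaps s gs), rfl⟩
  · rintro ⟨s, gs⟩ -
    simp only [perimeter, headI_ofGaps, length_ofGaps, weight, add_one_mul]
    omega

end Gaps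

end FuTang

theorem fu_tang (m n : ℕ) (hm : 1 ≤ m) (hn : 1 ≤ n) :
    Nat.card {l : List ℕ // IsPartition l ∧ perimeter l = n ∧ ∀ x ∈ l, x % (m + 1) = 1} =
    Nat.card {l : List ℕ // IsPartition l ∧ perimeter l = n ∧
      l.Chain' (fun a b => b + m ≤ a)} := by
  rw [FuTang.card_residue_partitions m hm hn]
  exact (FuTang.card_gap_partitions hn).symm
end

section
/- For all n, m ≥ 1, the number of compositions of n with all parts congruent to 1 modulo m equals the number of compositions of n + m − 1 with all parts at least m. -/
/-!
Write a composition whose parts lie in `a, a + b, a + 2b, …` as a binary word: the part `a + b k`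
becomes a letter `false` followed by `k` letters `true`, and the leading `false` is dropped. If
`false` weighs `a` and `true` weighs `b`, the word has weight `n - a`. For parts `≡ 1 (mod m)`
(`a = 1`, `b = m`) of `n` and for parts `≥ m` (`a = m`, `b = 1`) of `n + m - 1` this weight is
`n - 1` with the roles of the two letters exchanged, so negating every letter matches the two
families.
-/

/-- A composition of n: a finite sequence of positive integers summing to n. -/
def IsComposition (n : ℕ) (c : List ℕ) : Prop := (∀ x ∈ c, 0 < x) ∧ c.sum = n

open List

theorem List.notMem_of_mem_splitOn {α : Type*} [BEq α] [LawfulBEq α] {x : α} {w l : List α}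
    (hl : l ∈ w.splitOn x) : x ∉ l := by
  induction w generalizing l with
  | nil => simp_all
  | cons y w ih =>
    rw [splitOn_cons_eq_if_modifyHead] at hl
    split_ifs at hl with hy
    · rcases mem_cons.mp hl with rfl | hl
      · simp
      · exact ih hl
    · obtain ⟨l₀, ls, hw⟩ := exists_cons_of_ne_nil (splitOn_ne_nil x w)
      rw [hw, modifyHead_cons, mem_cons] at hl
      rcases hl with rfl | hl
      · refine not_mem_cons_of_ne_of_not_mem (Ne.symm (by simpa using hy)) (ih ?_)
        simp [hw]
      · exact ih (hw ▸ mem_cons_of_mem _ hl)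

def runLengths (w : List Bool) : List ℕ := (w.splitOn false).map length

def ofRunLengths (K : List ℕ) : List Bool := [false].intercalate (K.map (replicate · true))

theorem ofRunLengths_runLengths (w : List Bool) : ofRunLengths (runLengths w) = w := by
  have hrun : ∀ l ∈ w.splitOn false, replicate l.length true = l := fun l hl =>
    (eq_replicate_iff.mpr ⟨rfl, fun b hb => by
      simpa using ne_of_mem_of_not_mem hb (notMem_of_mem_splitOn hl)⟩).symm
  simp only [ofRunLengths, runLengths, map_map, Function.comp_def, map_congr_left hrun, map_id',
    intercalate_splitOn]

theorem runLengths_ofRunLengths {K : List ℕ} (hK : K ≠ []) : runLengths (ofRunLengths K) = K := by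
  rw [runLengths, ofRunLengths, splitOn_intercalate]
  · simp [map_map, Function.comp_def]
  · simp
  · simpa using hK

theorem runLengths_ne_nil (w : List Bool) : runLengths w ≠ [] := by
  simp [runLengths, splitOn_ne_nil]

def runLengthsEquiv : List Bool ≃ {K : List ℕ // K ≠ []} where
  toFun w := ⟨runLengths w, runLengths_ne_nil w⟩
  invFun K := ofRunLengths K
  left_inv := ofRunLengths_runLengths
  right_inv K := Subtype.ext (runLengths_ofRunLengths K.2)

theorem count_false_ofRunLengths (K : List ℕ) : (ofRunLengths K).count false = K.length - 1 := by
  induction K with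
  | nil => rfl
  | cons k K ih =>
    rcases K with _ | ⟨j, K⟩
    · simp [ofRunLengths, count_replicate]
    · rw [ofRunLengths, map_cons, intercalate_cons_of_ne_nil (by simp)]
      simp [ofRunLengths, count_replicate] at ih ⊢
      omega

theorem count_true_ofRunLengths (K : List ℕ) : (ofRunLengths K).count true = K.sum := by
  induction K with
  | nil => rfl
  | cons k K ih =>
    rcases K with _ | ⟨j, K⟩
    · simp [ofRunLengths]
    · rw [ofRunLengths, map_cons, intercalate_cons_of_ne_nil (by simp)]
      simp [ofRunLengths] at ih ⊢
      omega

theorem length_runLengths (w : List Bool) : (runLengths w).length = w.count false + 1 := by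
  conv_rhs => rw [← ofRunLengths_runLengths w, count_false_ofRunLengths]
  have := length_pos_of_ne_nil (runLengths_ne_nil w)
  omega

theorem sum_runLengths (w : List Bool) : (runLengths w).sum = w.count true := by
  conv_rhs => rw [← ofRunLengths_runLengths w, count_true_ofRunLengths]

section Progression

variable (a : ℕ) {b : ℕ}

theorem sum_map_affine (K : List ℕ) :
    (K.map (fun k => a + b * k)).sum = a * K.length + b * K.sum := by
  induction K with
  | nil => simp
  | cons k K ih => simp only [map_cons, sum_cons, length_cons, ih]; ring

theorem affine_sub_div (hb : 0 < b) (k : ℕ) : (a + b * k - a) / b = k := by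
  rw [Nat.add_sub_cancel_left, Nat.mul_div_cancel_left k hb]

theorem map_affine_map_sub_div (hb : 0 < b) {c : List ℕ} (hc : ∀ x ∈ c, ∃ k, x = a + b * k) :
    (c.map fun x => (x - a) / b).map (fun k => a + b * k) = c := by
  rw [map_map]
  refine (map_congr_left fun x hx => ?_).trans (map_id c)
  obtain ⟨k, rfl⟩ := hc x hx
  rw [Function.comp_apply, affine_sub_div a hb, id]

def progressionCoeffsEquiv (hb : 0 < b) (n : ℕ) :
    {c : List ℕ // c.sum = n ∧ ∀ x ∈ c, ∃ k, x = a + b * k} ≃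
      {K : List ℕ // a * K.length + b * K.sum = n} where
  toFun c := ⟨c.1.map (fun x => (x - a) / b), by
    rw [← sum_map_affine, map_affine_map_sub_div a hb c.2.2, c.2.1]⟩
  invFun K := ⟨K.1.map (fun k => a + b * k), by rw [sum_map_affine, K.2]; simp⟩
  left_inv c := Subtype.ext (map_affine_map_sub_div a hb c.2.2)
  right_inv K := Subtype.ext <| by
    simp only [map_map, Function.comp_def, affine_sub_div a hb, map_id']

def progressionCompositionsEquivWords (hb : 0 < b) {n : ℕ} (hn : n ≠ 0) :
    {c : List ℕ // c.sum = n ∧ ∀ x ∈ c, ∃ k, x = a + b * k} ≃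
      {w : List Bool // a * (w.count false + 1) + b * w.count true = n} :=
  (progressionCoeffsEquiv a hb n).trans <|
    ((Equiv.subtypeEquiv runLengthsEquiv fun w => by
      rw [runLengthsEquiv, Equiv.coe_fn_mk, length_runLengths, sum_runLengths]).trans
    (Equiv.subtypeSubtypeEquivSubtype fun hK hnil => by subst hnil; simp at hK; omega)).symm

end Progression

theorem count_map_not (b : Bool) (w : List Bool) : (w.map not).count b = w.count (!b) := by
  rw [← count_map_of_injective w not Bool.not_injective, Bool.not_not]

theorem isComposition_and_forall_iff {p q : ℕ → Prop} (h : ∀ x, 0 < x ∧ p x ↔ q x) {n : ℕ}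
    {c : List ℕ} : (IsComposition n c ∧ ∀ x ∈ c, p x) ↔ c.sum = n ∧ ∀ x ∈ c, q x := by
  simp only [IsComposition, ← h, imp_and, forall_and]
  tauto

theorem pos_and_mod_eq_one_mod_iff (m x : ℕ) : 0 < x ∧ x % m = 1 % m ↔ ∃ k, x = 1 + m * k := by
  refine ⟨fun ⟨hx, h⟩ => ?_, fun ⟨k, hk⟩ => ⟨by omega, hk ▸ Nat.add_mul_mod_self_left 1 m k⟩⟩
  obtain ⟨k, hk⟩ := (Nat.modEq_iff_dvd' hx).mp h.symm
  exact ⟨k, by omega⟩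

theorem munagi (n m : ℕ) (hn : 1 ≤ n) (hm : 1 ≤ m) :
    Nat.card {c : List ℕ // IsComposition n c ∧ ∀ x ∈ c, x % m = 1 % m} =
    Nat.card {c : List ℕ // IsComposition (n + m - 1) c ∧ ∀ x ∈ c, m ≤ x} := by
  have hge (x : ℕ) : 0 < x ∧ m ≤ x ↔ ∃ k, x = m + 1 * k :=
    ⟨fun ⟨_, h⟩ => ⟨x - m, by omega⟩, fun ⟨k, hk⟩ => by omega⟩
  have hswap (w : List Bool) : 1 * (w.count false + 1) + m * w.count true = n ↔
      m * ((w.map not).count false + 1) + 1 * (w.map not).count true = n + m - 1 := by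
    simp only [count_map_not, Bool.not_false, Bool.not_true, mul_add, one_mul]
    omega
  calc _ = Nat.card {w : List Bool // 1 * (w.count false + 1) + m * w.count true = n} :=
        Nat.card_congr <| (Equiv.subtypeEquivRight fun _ =>
          isComposition_and_forall_iff (pos_and_mod_eq_one_mod_iff m)).trans
          (progressionCompositionsEquivWords 1 hm (by omega))
    _ = Nat.card {w : List Bool // m * (w.count false + 1) + 1 * w.count true = n + m - 1} :=
        Nat.card_congr <| Equiv.subtypeEquiv (Bool.involutive_not.list_map.toPerm _) hswap
    _ = _ := Nat.card_congr <| ((Equiv.subtypeEquivRight fun _ =>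
        isComposition_and_forall_iff hge).trans
          (progressionCompositionsEquivWords m one_pos (by omega))).symm
end

section
/- Let m ≥ 2, n ≥ 1, and let R be a nonempty subset of {1, 2, …, m−1}. The number of compositions of n all of whose parts are congruent modulo m to some element of R equals the number of compositions of n all of whose parts lie in R ∪ {m} and whose last part lies in R. -/
def splitParts (m : ℕ) (c : List ℕ) : List ℕ :=
  c.flatMap fun x => List.replicate (x / m) m ++ [x % m]

def addToHead (a : ℕ) : List ℕ → List ℕ
  | [] => [a]
  | y :: t => (a + y) :: t

def mergeParts (m : ℕ) : List ℕ → List ℕ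
  | [] => []
  | x :: l => if x = m then addToHead m (mergeParts m l) else x :: mergeParts m l

section SplitMerge

variable {m : ℕ}

@[simp]
theorem splitParts_nil : splitParts m [] = [] := rfl

theorem splitParts_cons (x : ℕ) (c : List ℕ) :
    splitParts m (x :: c) = List.replicate (x / m) m ++ x % m :: splitParts m c := by
  simp [splitParts]

theorem splitParts_cons_of_lt {x : ℕ} (hx : x < m) (c : List ℕ) :
    splitParts m (x :: c) = x :: splitParts m c := by
  simp [splitParts_cons, Nat.div_eq_of_lt hx, Nat.mod_eq_of_lt hx]

theorem splitParts_add_cons (hm : 0 < m) (y : ℕ) (c : List ℕ) :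
    splitParts m ((m + y) :: c) = m :: splitParts m (y :: c) := by
  simp [splitParts_cons, Nat.add_div_left y hm, List.replicate_succ]

theorem sum_splitParts (c : List ℕ) : (splitParts m c).sum = c.sum := by
  induction c with
  | nil => rfl
  | cons x c ih => simp [splitParts_cons, ih, ← add_assoc, Nat.div_add_mod']

theorem mod_mem_splitParts {x : ℕ} {c : List ℕ} (hx : x ∈ c) : x % m ∈ splitParts m c :=
  List.mem_flatMap.2 ⟨x, hx, by simp⟩

theorem eq_or_mod_of_mem_splitParts {y : ℕ} {c : List ℕ} (hy : y ∈ splitParts m c) :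
    y = m ∨ ∃ x ∈ c, x % m = y := by
  obtain ⟨x, hx, hy⟩ := List.mem_flatMap.1 hy
  rcases List.mem_append.1 hy with h | h
  · exact .inl (List.eq_of_mem_replicate h)
  · exact .inr ⟨x, hx, (List.mem_singleton.1 h).symm⟩

theorem getLast?_splitParts (c : List ℕ) :
    (splitParts m c).getLast? = c.getLast?.map (· % m) := by
  induction c with
  | nil => rfl
  | cons x c ih =>
    rw [splitParts_cons, List.getLast?_append, List.getLast?_cons, ih, List.getLast?_cons]
    cases c.getLast? <;> simp

theorem mergeParts_replicate_append {r : ℕ} (hr : r ≠ m) (k : ℕ) (l : List ℕ) :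
    mergeParts m (List.replicate k m ++ r :: l) = (k * m + r) :: mergeParts m l := by
  induction k with
  | zero => simp [mergeParts, hr]
  | succ k ih =>
    simp [List.replicate_succ, mergeParts, ih, addToHead, add_mul, add_assoc, add_comm m]

theorem mergeParts_splitParts (hm : 0 < m) (c : List ℕ) : mergeParts m (splitParts m c) = c := by
  induction c with
  | nil => rfl
  | cons x c ih =>
    rw [splitParts_cons, mergeParts_replicate_append (Nat.mod_lt x hm).ne, ih, Nat.div_add_mod']

theorem splitParts_mergeParts (hm : 0 < m) {l : List ℕ} (hle : ∀ x ∈ l, x ≤ m)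
    (hlast : l.getLast? ≠ some m) : splitParts m (mergeParts m l) = l := by
  induction l with
  | nil => rfl
  | cons x l ih =>
    have hlast' : l.getLast? ≠ some m := fun h => hlast (by simp [List.getLast?_cons, h])
    have ih := ih (fun y hy => hle y (List.mem_cons_of_mem x hy)) hlast'
    by_cases hx : x = m
    · subst x
      -- `m` is not the last part, so `mergeParts m l` has a head to absorb it
      obtain ⟨y, t, hyt⟩ : ∃ y t, mergeParts m l = y :: t := by
        refine List.exists_cons_of_ne_nil fun h => hlast ?_
        rw [h, splitParts_nil] at ih
        simp [← ih]
      rw [hyt] at ih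
      simp [mergeParts, hyt, addToHead, splitParts_add_cons hm, ih]
    · have hlt : x < m := lt_of_le_of_ne (hle x List.mem_cons_self) hx
      simp [mergeParts, hx, splitParts_cons_of_lt hlt, ih]

end SplitMerge

theorem isComposition_splitParts_iff {m n : ℕ} (hm : 0 < m) {R : Finset ℕ}
    (hRsub : R ⊆ Finset.Icc 1 (m - 1)) (c : List ℕ) :
    (IsComposition n c ∧ ∀ x ∈ c, x % m ∈ R) ↔
      IsComposition n (splitParts m c) ∧ (∀ x ∈ splitParts m c, x ∈ R ∨ x = m) ∧
        ∀ x : ℕ, (splitParts m c).getLast? = some x → x ∈ R := by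
  have hR : ∀ r ∈ R, 1 ≤ r ∧ r ≤ m - 1 := fun r hr => Finset.mem_Icc.1 (hRsub hr)
  simp only [IsComposition, sum_splitParts, getLast?_splitParts, Option.map_eq_some_iff]
  constructor
  · rintro ⟨⟨-, hsum⟩, hmod⟩
    refine ⟨⟨fun y hy => ?_, hsum⟩, fun y hy => ?_, ?_⟩
    · rcases eq_or_mod_of_mem_splitParts hy with rfl | ⟨x, hx, rfl⟩
      exacts [hm, (hR _ (hmod x hx)).1]
    · rcases eq_or_mod_of_mem_splitParts hy with rfl | ⟨x, hx, rfl⟩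
      exacts [.inr rfl, .inl (hmod x hx)]
    · rintro _ ⟨x, hx, rfl⟩
      exact hmod x (List.mem_of_getLast? hx)
  · rintro ⟨⟨-, hsum⟩, hmem, -⟩
    have hmod : ∀ x ∈ c, x % m ∈ R := fun x hx =>
      (hmem _ (mod_mem_splitParts hx)).resolve_right (Nat.mod_lt x hm).ne
    refine ⟨⟨fun x hx => ?_, hsum⟩, hmod⟩
    exact lt_of_lt_of_le (hR _ (hmod x hx)).1 (Nat.mod_le x m)

theorem congruence_lemma_general (m n : ℕ) (hm : 2 ≤ m)
    (R : Finset ℕ) (hRsub : R ⊆ Finset.Icc 1 (m - 1)) :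
    Nat.card {c : List ℕ // IsComposition n c ∧ ∀ x ∈ c, x % m ∈ R} =
    Nat.card {c : List ℕ // IsComposition n c ∧ (∀ x ∈ c, x ∈ R ∨ x = m) ∧
      ∀ x : ℕ, c.getLast? = some x → x ∈ R} := by
  have hm0 : 0 < m := by omega
  have hR : ∀ r ∈ R, r < m := fun r hr => by have := Finset.mem_Icc.1 (hRsub hr); omega
  have hiff := isComposition_splitParts_iff (n := n) hm0 hRsub
  refine Nat.card_congr <|
    Equiv.ofBijective (fun c => ⟨splitParts m c, (hiff c).1 c.2⟩) ⟨?_, ?_⟩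
  · intro c d h
    exact Subtype.ext <|
      Function.LeftInverse.injective (mergeParts_splitParts hm0) (congrArg Subtype.val h)
  · rintro ⟨d, hd, hmem, hlast⟩
    have hsplit : splitParts m (mergeParts m d) = d := by
      refine splitParts_mergeParts hm0 (fun x hx => ?_) fun h => (hR m (hlast m h)).false
      rcases hmem x hx with h | rfl
      exacts [(hR x h).le, le_rfl]
    refine ⟨⟨mergeParts m d, (hiff _).2 ?_⟩, Subtype.ext hsplit⟩
    rw [hsplit]
    exact ⟨hd, hmem, hlast⟩

theorem congruence_lemma (m n : ℕ) (hm : 2 ≤ m) (hn : 1 ≤ n)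
    (R : Finset ℕ) (hR : R.Nonempty) (hRsub : R ⊆ Finset.Icc 1 (m - 1)) :
    Nat.card {c : List ℕ // IsComposition n c ∧ ∀ x ∈ c, x % m ∈ R} =
    Nat.card {c : List ℕ // IsComposition n c ∧ (∀ x ∈ c, x ∈ R ∨ x = m) ∧
      ∀ x : ℕ, c.getLast? = some x → x ∈ R} :=
  congruence_lemma_general m n hm R hRsub
end

section
/- The map sending a composition c = (c₁, …, c_ℓ) of n to the sequence λ with λᵢ = 1 + Σ_{j=i}^{ℓ} (c_j − 1) is a bijection between compositions of n and partitions with perimeter n, and it preserves the number of parts: ℓ(λ) = ℓ(c). -/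
/-- The map π sending a composition to a partition: λᵢ = 1 + Σ_{j=i}^{ℓ} (c_j − 1). -/
def piMap (c : List ℕ) : List ℕ :=
  (List.range c.length).map (fun i => 1 + ((c.drop i).map (· - 1)).sum)

lemma piMap_nil : piMap [] = [] := rfl

lemma piMap_cons (a : ℕ) (t : List ℕ) :
    piMap (a :: t) = (a - 1 + (piMap t).headD 1) :: piMap t := by
  cases t <;> simp [piMap, List.range_succ_eq_map, List.map_map, Function.comp_def] <;> omega

lemma length_piMap (c : List ℕ) : (piMap c).length = c.length := by simp [piMap]

lemma headD_piMap_add_length {c : List ℕ} (hc : ∀ x ∈ c, 0 < x) :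
    (piMap c).headD 1 + c.length = c.sum + 1 := by
  induction c with
  | nil => rfl
  | cons a t ih =>
    have ha := hc a List.mem_cons_self
    have ht := ih fun x hx => hc x (List.mem_cons_of_mem a hx)
    simp only [piMap_cons, List.headD_cons, List.length_cons, List.sum_cons]
    omega

lemma perimeter_piMap {c : List ℕ} (hc : ∀ x ∈ c, 0 < x) (hne : c ≠ []) :
    perimeter (piMap c) = c.sum := by
  obtain ⟨a, t, rfl⟩ := List.exists_cons_of_ne_nil hne
  have h := headD_piMap_add_length hc
  simp only [piMap_cons, List.headD_cons] at h
  simp only [perimeter, piMap_cons, List.headI_cons, List.length_cons, length_piMap] at h ⊢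
  omega

lemma isPartition_cons_iff {a : ℕ} {l : List ℕ} :
    IsPartition (a :: l) ↔ IsPartition l ∧ l.headD 1 ≤ a := by
  cases l with
  | nil => simp [IsPartition, Nat.pos_iff_ne_zero, Nat.one_le_iff_ne_zero]
  | cons b s =>
    simp only [IsPartition, List.pairwise_cons, List.mem_cons,
      forall_eq_or_imp, List.headD_cons]
    constructor
    · rintro ⟨⟨-, hb, hs⟩, ⟨hba, hsa⟩, hbs, hs'⟩
      exact ⟨⟨⟨hb, hs⟩, hbs, hs'⟩, hba⟩
    · rintro ⟨⟨⟨hb, hs⟩, hbs, hs'⟩, hba⟩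
      exact ⟨⟨by omega, hb, hs⟩, ⟨hba, fun x hx => (hbs x hx).trans hba⟩, hbs, hs'⟩

lemma isPartition_piMap (c : List ℕ) : IsPartition (piMap c) := by
  induction c with
  | nil => simp [piMap_nil, IsPartition]
  | cons a t ih => exact piMap_cons a t ▸ isPartition_cons_iff.2 ⟨ih, by omega⟩

def piInv : List ℕ → List ℕ
  | [] => []
  | a :: t => (a - t.headD 1 + 1) :: piInv t

lemma piInv_ne_nil {l : List ℕ} (hl : l ≠ []) : piInv l ≠ [] := by
  obtain ⟨a, t, rfl⟩ := List.exists_cons_of_ne_nil hl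
  simp [piInv]

lemma pos_of_mem_piInv (l : List ℕ) : ∀ x ∈ piInv l, 0 < x := by
  induction l with
  | nil => simp [piInv]
  | cons a t ih => simpa [piInv] using ih

lemma piInv_piMap {c : List ℕ} (hc : ∀ x ∈ c, 0 < x) : piInv (piMap c) = c := by
  induction c with
  | nil => rfl
  | cons a t ih =>
    have ha := hc a List.mem_cons_self
    rw [piMap_cons, piInv, ih fun x hx => hc x (List.mem_cons_of_mem a hx)]
    congr 1
    omega

lemma piMap_piInv {l : List ℕ} (hl : IsPartition l) : piMap (piInv l) = l := by
  induction l with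
  | nil => rfl
  | cons a t ih =>
    obtain ⟨ht, hta⟩ := isPartition_cons_iff.1 hl
    rw [piInv, piMap_cons, ih ht]
    congr 1
    omega

theorem piMap_bijection (n : ℕ) (hn : 1 ≤ n) :
    Set.BijOn piMap {c : List ℕ | IsComposition n c}
      {l : List ℕ | IsPartition l ∧ perimeter l = n} ∧
    ∀ c : List ℕ, IsComposition n c → (piMap c).length = c.length := by
  have maps_to : Set.MapsTo piMap {c | IsComposition n c} {l | IsPartition l ∧ perimeter l = n} := by
    rintro c ⟨hc, rfl⟩
    have hne : c ≠ [] := by rintro rfl; simp at hn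
    exact ⟨isPartition_piMap c, perimeter_piMap hc hne⟩
  have maps_to_inv :
      Set.MapsTo piInv {l | IsPartition l ∧ perimeter l = n} {c | IsComposition n c} := by
    rintro l ⟨hl, rfl⟩
    have hne : l ≠ [] := by rintro rfl; simp [perimeter] at hn
    refine ⟨pos_of_mem_piInv l, ?_⟩
    rw [← perimeter_piMap (pos_of_mem_piInv l) (piInv_ne_nil hne), piMap_piInv hl]
  have inv_on : Set.InvOn piInv piMap {c | IsComposition n c}
      {l | IsPartition l ∧ perimeter l = n} :=
    ⟨fun c hc => piInv_piMap hc.1, fun l hl => piMap_piInv hl.1⟩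
  exact ⟨inv_on.bijOn maps_to maps_to_inv, fun c _ => length_piMap c⟩
end

section
/- For all n ≥ 1, the number of compositions of n with all parts odd equals the number of compositions of n with all parts in {1, 2} and last part equal to 1. -/
/-! An odd part `2m + 1` corresponds to the block `2, …, 2, 1` with `m` twos. Every sequence
of ones and twos ending in a one splits uniquely into such blocks (cut after each one), so
concatenating blocks is a sum-preserving bijection between the two kinds of compositions. -/

namespace OddComposition

def twosThenOne (m : ℕ) : List ℕ := List.replicate m 2 ++ [1]

def toOneTwo (c : List ℕ) : List ℕ := c.flatMap fun a => twosThenOne (a / 2)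

def ofOneTwo : List ℕ → List ℕ
  | [] => []
  | 2 :: d => (ofOneTwo d).modifyHead (· + 2)
  | _ :: d => 1 :: ofOneTwo d

lemma toOneTwo_cons (a : ℕ) (c : List ℕ) :
    toOneTwo (a :: c) = List.replicate (a / 2) 2 ++ 1 :: toOneTwo c := by
  simp [toOneTwo, twosThenOne]

lemma toOneTwo_one_cons (c : List ℕ) : toOneTwo (1 :: c) = 1 :: toOneTwo c := by
  simp [toOneTwo_cons]

lemma toOneTwo_modifyHead_add_two {c : List ℕ} (hc : c ≠ []) :
    toOneTwo (c.modifyHead (· + 2)) = 2 :: toOneTwo c := by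
  obtain ⟨a, c, rfl⟩ := List.exists_cons_of_ne_nil hc
  simp [toOneTwo_cons, show (a + 2) / 2 = a / 2 + 1 by omega, List.replicate_succ]

lemma sum_toOneTwo {c : List ℕ} (hc : ∀ x ∈ c, Odd x) : (toOneTwo c).sum = c.sum := by
  induction c with
  | nil => rfl
  | cons a c ih =>
    obtain ⟨k, rfl⟩ := hc a List.mem_cons_self
    simp only [toOneTwo_cons, show (2 * k + 1) / 2 = k by omega, List.sum_append,
      List.sum_replicate, smul_eq_mul, List.sum_cons,
      ih fun x hx => hc x (List.mem_cons_of_mem _ hx)]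
    ring

lemma mem_toOneTwo {c : List ℕ} {x : ℕ} (hx : x ∈ toOneTwo c) : x = 1 ∨ x = 2 := by
  simp only [toOneTwo, twosThenOne, List.mem_flatMap, List.mem_append, List.mem_replicate,
    List.mem_singleton] at hx
  obtain ⟨a, -, h | h⟩ := hx
  · exact Or.inr h.2
  · exact Or.inl h

lemma getLast?_toOneTwo {c : List ℕ} (hc : c ≠ []) : (toOneTwo c).getLast? = some 1 := by
  obtain ⟨a, l, h⟩ := List.exists_cons_of_ne_nil (List.reverse_ne_nil_iff.mpr hc)
  simp [toOneTwo, List.getLast?_flatMap, twosThenOne, h]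

lemma ofOneTwo_replicate_two_append (m : ℕ) (d : List ℕ) :
    ofOneTwo (List.replicate m 2 ++ 1 :: d) = (2 * m + 1) :: ofOneTwo d := by
  induction m with
  | zero => simp [ofOneTwo]
  | succ m ih =>
    rw [List.replicate_succ, List.cons_append, ofOneTwo, ih, List.modifyHead_cons]
    ring_nf

lemma ofOneTwo_toOneTwo {c : List ℕ} (hc : ∀ x ∈ c, Odd x) : ofOneTwo (toOneTwo c) = c := by
  induction c with
  | nil => rfl
  | cons a c ih =>
    obtain ⟨k, rfl⟩ := hc a List.mem_cons_self
    rw [toOneTwo_cons, ofOneTwo_replicate_two_append,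
      ih fun x hx => hc x (List.mem_cons_of_mem _ hx)]
    congr 1
    omega

lemma odd_of_mem_modifyHead_add_two {l : List ℕ} (hl : ∀ x ∈ l, Odd x) :
    ∀ x ∈ l.modifyHead (· + 2), Odd x := by
  cases l with
  | nil => simp
  | cons a l =>
    obtain ⟨k, hk⟩ := hl a List.mem_cons_self
    simp only [List.modifyHead_cons, List.mem_cons, forall_eq_or_imp] at hl ⊢
    exact ⟨⟨k + 1, by omega⟩, hl.2⟩

lemma odd_of_mem_ofOneTwo (d : List ℕ) : ∀ x ∈ ofOneTwo d, Odd x := by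
  induction d with
  | nil => simp [ofOneTwo]
  | cons y d ih =>
    by_cases hy : y = 2
    · simpa [hy, ofOneTwo] using odd_of_mem_modifyHead_add_two ih
    · simpa [ofOneTwo.eq_3 y d hy] using ih

lemma toOneTwo_ofOneTwo {d : List ℕ} (h12 : ∀ x ∈ d, x = 1 ∨ x = 2)
    (hlast : d.getLast? ≠ some 2) : toOneTwo (ofOneTwo d) = d := by
  induction d with
  | nil => rfl
  | cons y d ih =>
    have hd : d.getLast? ≠ some 2 := by
      intro h; simp_all [List.getLast?_cons]
    rcases h12 y List.mem_cons_self with rfl | rfl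
    · simp [ofOneTwo, toOneTwo_one_cons,
        ih (fun x hx => h12 x (List.mem_cons_of_mem _ hx)) hd]
    · have hd' : d ≠ [] := by rintro rfl; simp at hlast
      have := ih (fun x hx => h12 x (List.mem_cons_of_mem _ hx)) hd
      have hne : ofOneTwo d ≠ [] := fun h => hd' (by rw [← this, h]; rfl)
      simp [ofOneTwo, toOneTwo_modifyHead_add_two hne, this]

lemma ne_nil_of_isComposition {n : ℕ} {c : List ℕ} (hn : 1 ≤ n) (hc : IsComposition n c) :
    c ≠ [] := by
  rintro rfl
  rw [← hc.2, List.sum_nil] at hn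
  omega

lemma isComposition_toOneTwo {n : ℕ} {c : List ℕ} (hc : IsComposition n c)
    (hodd : ∀ x ∈ c, Odd x) : IsComposition n (toOneTwo c) :=
  ⟨fun x hx => by rcases mem_toOneTwo hx with rfl | rfl <;> decide,
    by rw [sum_toOneTwo hodd, hc.2]⟩

lemma isComposition_ofOneTwo {n : ℕ} {d : List ℕ} (hd : IsComposition n d)
    (h12 : ∀ x ∈ d, x = 1 ∨ x = 2) (hlast : d.getLast? ≠ some 2) :
    IsComposition n (ofOneTwo d) :=
  ⟨fun x hx => (odd_of_mem_ofOneTwo d x hx).pos,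
    by rw [← sum_toOneTwo (odd_of_mem_ofOneTwo d), toOneTwo_ofOneTwo h12 hlast, hd.2]⟩

def oddEquivOneTwo (n : ℕ) (hn : 1 ≤ n) :
    {c : List ℕ // IsComposition n c ∧ ∀ x ∈ c, Odd x} ≃
      {d : List ℕ // IsComposition n d ∧ (∀ x ∈ d, x = 1 ∨ x = 2) ∧ d.getLast? = some 1} where
  toFun c := ⟨toOneTwo c.1, isComposition_toOneTwo c.2.1 c.2.2, fun _ => mem_toOneTwo,
    getLast?_toOneTwo (ne_nil_of_isComposition hn c.2.1)⟩
  invFun d := ⟨ofOneTwo d.1, isComposition_ofOneTwo d.2.1 d.2.2.1 (by simp [d.2.2.2]),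
    odd_of_mem_ofOneTwo d.1⟩
  left_inv c := Subtype.ext (ofOneTwo_toOneTwo c.2.2)
  right_inv d := Subtype.ext (toOneTwo_ofOneTwo d.2.2.1 (by simp [d.2.2.2]))

end OddComposition

theorem odd_eq_one_two (n : ℕ) (hn : 1 ≤ n) :
    Nat.card {c : List ℕ // IsComposition n c ∧ ∀ x ∈ c, Odd x} =
    Nat.card {c : List ℕ // IsComposition n c ∧ (∀ x ∈ c, x = 1 ∨ x = 2) ∧
      c.getLast? = some 1} :=
  Nat.card_congr (OddComposition.oddEquivOneTwo n hn)
end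

section
/- For all m ≥ 2 and n ≥ 1, the number of compositions c of n such that 1 + Σ_{j=i}^{ℓ(c)} (c_j − 1) is not divisible by m for every index 1 ≤ i ≤ ℓ(c) equals the number of partitions with perimeter n having no part divisible by m. -/
/-!
Sending a composition `c` to the list of its suffix values `1 + ∑_{j ≥ i} (c_j - 1)` gives a
weakly decreasing list of positive integers whose largest part is `1 + n - ℓ(c)` and whose length
is `ℓ(c)`, hence a partition of perimeter `n`. Taking successive differences `λ_i - λ_{i+1} + 1`
(and keeping the last part) inverts it. The parts of the partition are exactly the quantities
constrained in the statement, so any condition on them, in particular `m ∤ x`, is carried across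
the bijection.
-/

def toPartition : List ℕ → List ℕ
  | [] => []
  | a :: t => (1 + ((a :: t).map (· - 1)).sum) :: toPartition t

def toComposition : List ℕ → List ℕ
  | [] => []
  | [a] => [a]
  | a :: b :: t => (a + 1 - b) :: toComposition (b :: t)

theorem mem_toPartition {x : ℕ} : ∀ {c : List ℕ},
    x ∈ toPartition c ↔ ∃ i < c.length, x = 1 + ((c.drop i).map (· - 1)).sum
  | [] => by simp [toPartition]
  | a :: t => by
    simp only [toPartition, List.mem_cons, mem_toPartition (c := t)]
    constructor
    · rintro (rfl | ⟨i, hi, rfl⟩)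
      · exact ⟨0, by simp⟩
      · exact ⟨i + 1, by simpa using hi, by simp⟩
    · rintro ⟨_ | i, hi, rfl⟩
      · exact Or.inl (by simp)
      · exact Or.inr ⟨i, by simpa using hi, by simp⟩

theorem forall_mem_toPartition_iff {P : ℕ → Prop} {c : List ℕ} :
    (∀ x ∈ toPartition c, P x) ↔ ∀ i < c.length, P (1 + ((c.drop i).map (· - 1)).sum) := by
  simp only [mem_toPartition]
  grind

theorem length_toPartition : ∀ c : List ℕ, (toPartition c).length = c.length
  | [] => rfl
  | a :: t => by simp [toPartition, length_toPartition t]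

theorem toPartition_cons_of_ne_nil (a : ℕ) {c : List ℕ} (hc : c ≠ []) :
    toPartition (a :: c) = (a - 1 + (toPartition c).headI) :: toPartition c := by
  obtain ⟨b, t, rfl⟩ := List.exists_cons_of_ne_nil hc
  simp only [toPartition, List.map_cons, List.sum_cons, List.headI, List.cons.injEq, and_true]
  omega

theorem pairwise_toPartition : ∀ c : List ℕ, (toPartition c).Pairwise (· ≥ ·)
  | [] => List.Pairwise.nil
  | a :: t => by
    refine List.pairwise_cons.2 ⟨?_, pairwise_toPartition t⟩
    rintro _ hx
    obtain ⟨i, -, rfl⟩ := mem_toPartition.1 hx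
    have hsub : ((t.drop i).map (· - 1)).Sublist ((a :: t).map (· - 1)) :=
      ((t.drop_sublist i).trans (List.sublist_cons_self a t)).map _
    have := hsub.sum_le_sum fun x _ => Nat.zero_le x
    omega

theorem isPartition_toPartition (c : List ℕ) : IsPartition (toPartition c) := by
  refine ⟨fun x hx => ?_, pairwise_toPartition c⟩
  obtain ⟨i, -, rfl⟩ := mem_toPartition.1 hx
  omega

theorem sum_map_pred_add_length : ∀ {c : List ℕ}, (∀ x ∈ c, 0 < x) →
    (c.map (· - 1)).sum + c.length = c.sum
  | [], _ => rfl
  | a :: t, hc => by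
    have ha := hc a List.mem_cons_self
    have := sum_map_pred_add_length fun x hx => hc x (List.mem_cons_of_mem a hx)
    simp only [List.map_cons, List.sum_cons, List.length_cons]
    omega

theorem perimeter_toPartition {c : List ℕ} (hc : ∀ x ∈ c, 0 < x) :
    perimeter (toPartition c) = c.sum := by
  cases c with
  | nil => rfl
  | cons a t =>
    have := sum_map_pred_add_length hc
    have := length_toPartition t
    simp only [perimeter, toPartition, List.headI, List.length_cons] at *
    omega

theorem toComposition_toPartition : ∀ {c : List ℕ}, (∀ x ∈ c, 0 < x) →
    toComposition (toPartition c) = c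
  | [], _ => rfl
  | [a], hc => by
    have := hc a List.mem_cons_self
    simp only [toPartition, toComposition, List.map_cons, List.map_nil, List.sum_cons,
      List.sum_nil]
    congr 1
    omega
  | a :: b :: t, hc => by
    have ha := hc a List.mem_cons_self
    have ih := toComposition_toPartition fun x hx => hc x (List.mem_cons_of_mem a hx)
    rw [toPartition_cons_of_ne_nil a (List.cons_ne_nil b t)]
    obtain ⟨h, r, hbt⟩ : ∃ h r, toPartition (b :: t) = h :: r := ⟨_, _, rfl⟩
    rw [hbt] at ih ⊢
    rw [toComposition, ih, List.headI]
    congr 1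
    omega

theorem pos_of_mem_toComposition :
    ∀ {l : List ℕ}, IsPartition l → ∀ x ∈ toComposition l, 0 < x
  | [], _ => by simp [toComposition]
  | [a], ⟨hpos, _⟩ => by simpa [toComposition] using hpos a List.mem_cons_self
  | a :: b :: t, ⟨hpos, hsort⟩ => by
    have hba : b ≤ a := (List.pairwise_cons.1 hsort).1 b List.mem_cons_self
    have ih := pos_of_mem_toComposition
      ⟨fun x hx => hpos x (List.mem_cons_of_mem a hx), (List.pairwise_cons.1 hsort).2⟩
    rintro x (_ | ⟨_, hx⟩)
    · omega
    · exact ih x hx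

theorem toPartition_toComposition :
    ∀ {l : List ℕ}, IsPartition l → toPartition (toComposition l) = l
  | [], _ => rfl
  | [a], ⟨hpos, _⟩ => by
    have := hpos a List.mem_cons_self
    simp only [toComposition, toPartition, List.map_cons, List.map_nil, List.sum_cons,
      List.sum_nil]
    congr 1
    omega
  | a :: b :: t, ⟨hpos, hsort⟩ => by
    have hba : b ≤ a := (List.pairwise_cons.1 hsort).1 b List.mem_cons_self
    have hb : 0 < b := hpos b (List.mem_cons_of_mem a List.mem_cons_self)
    have ih := toPartition_toComposition
      ⟨fun x hx => hpos x (List.mem_cons_of_mem a hx), (List.pairwise_cons.1 hsort).2⟩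
    have hne : toComposition (b :: t) ≠ [] := by
      intro h
      simp [h, toPartition] at ih
    rw [toComposition, toPartition_cons_of_ne_nil _ hne, ih, List.headI]
    congr 1
    omega

theorem isComposition_toComposition {n : ℕ} {l : List ℕ} (hl : IsPartition l)
    (hper : perimeter l = n) : IsComposition n (toComposition l) := by
  have hpos := pos_of_mem_toComposition hl
  refine ⟨hpos, ?_⟩
  rw [← hper, ← perimeter_toPartition hpos, toPartition_toComposition hl]

theorem card_composition_eq_card_partition (n : ℕ) (P : ℕ → Prop) :
    Nat.card {c : List ℕ // IsComposition n c ∧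
      ∀ i < c.length, P (1 + ((c.drop i).map (· - 1)).sum)} =
    Nat.card {l : List ℕ // IsPartition l ∧ perimeter l = n ∧ ∀ x ∈ l, P x} :=
  Nat.card_congr
    { toFun := fun c =>
        ⟨toPartition c.1, isPartition_toPartition c.1,
          (perimeter_toPartition c.2.1.1).trans c.2.1.2, forall_mem_toPartition_iff.2 c.2.2⟩
      invFun := fun l =>
        ⟨toComposition l.1, isComposition_toComposition l.2.1 l.2.2.1,
          forall_mem_toPartition_iff.1 ((toPartition_toComposition l.2.1).symm ▸ l.2.2.2)⟩
      left_inv := fun c => Subtype.ext (toComposition_toPartition c.2.1.1)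
      right_inv := fun l => Subtype.ext (toPartition_toComposition l.2.1) }

theorem composition_partition_regular_general (m n : ℕ) :
    Nat.card {c : List ℕ // IsComposition n c ∧
      ∀ i : ℕ, i < c.length → ¬ m ∣ (1 + ((c.drop i).map (· - 1)).sum)} =
    Nat.card {l : List ℕ // IsPartition l ∧ perimeter l = n ∧ ∀ x ∈ l, ¬ m ∣ x} :=
  card_composition_eq_card_partition n (¬ m ∣ ·)

theorem composition_partition_regular (m n : ℕ) (hm : 2 ≤ m) (hn : 1 ≤ n) :
    Nat.card {c : List ℕ // IsComposition n c ∧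
      ∀ i : ℕ, i < c.length → ¬ m ∣ (1 + ((c.drop i).map (· - 1)).sum)} =
    Nat.card {l : List ℕ // IsPartition l ∧ perimeter l = n ∧ ∀ x ∈ l, ¬ m ∣ x} :=
  composition_partition_regular_general m n
end
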